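/- Under the hypotheses of the margin lemma, if additionally η ≤ 1/(4·|S|·h), then: if s(υ_i) = s(υ_j) we have Δ*(i,j) ≤ 1/(4|Υ|), and if s(υ_i) ≠ s(υ_j) we have Δ*(i,j) ≥ 1/|Υ|. -/
import Mathlib


open scoped BigOperators

/-- Under the near-deterministic margin hypotheses, if furthermore `η ≤ 1/(4|S|h)`, then
`Δ*(i,j) ≤ 1/(4|Υ|)` when the two paths reach the same state and `Δ*(i,j) ≥ 1/|Υ|`
otherwise, where `Δ*(i,j) = Σ_s |P(s|υᵢ) - P(s|υⱼ)| / |Υ|`. -/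
theorem margin_near_deterministic_clean
    {Υ S : Type*} [Fintype Υ] [Nonempty Υ] [Fintype S]
    (P : Υ → S → ℝ) (sOf : Υ → S) (η : ℝ) (h : ℕ)
    (hη : 0 ≤ η) (hpos : 0 < h) (hηh : η * h ≤ 1)
    (hηsmall : η ≤ 1 / (4 * (Fintype.card S : ℝ) * h))
    (hP0 : ∀ υ s, 0 ≤ P υ s) (hP1 : ∀ υ, ∑ s, P υ s = 1)
    (hhit : ∀ υ, 1 - η * h ≤ P υ (sOf υ))
    (hmiss : ∀ υ s, s ≠ sOf υ → P υ s ≤ η * h)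
    (υi υj : Υ)
    (Δ : ℝ) (hΔ : Δ = (∑ s, |P υi s - P υj s|) / (Fintype.card Υ : ℝ)) :
    (sOf υi = sOf υj → Δ ≤ 1 / (4 * (Fintype.card Υ : ℝ))) ∧
    (sOf υi ≠ sOf υj → 1 / (Fintype.card Υ : ℝ) ≤ Δ) := by
  classical
  have hcS : (0:ℝ) < Fintype.card S := by
    have : 0 < Fintype.card S := Fintype.card_pos_iff.mpr ⟨sOf υi⟩
    exact_mod_cast this
  have hcΥ : (0:ℝ) < Fintype.card Υ := by exact_mod_cast Fintype.card_pos
  have hhR : (0:ℝ) < h := by exact_mod_cast hpos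
  -- η h ≤ 1/(4 |S|)
  have hηh4 : η * h ≤ 1 / (4 * Fintype.card S) := by
    have := mul_le_mul_of_nonneg_right hηsmall hhR.le
    calc η * h ≤ 1 / (4 * (Fintype.card S : ℝ) * h) * h := this
      _ = 1 / (4 * Fintype.card S) := by field_simp
  have hPle1 : ∀ υ s, P υ s ≤ 1 := by
    intro υ s
    have := Finset.single_le_sum (f := fun t => P υ t) (fun t _ => hP0 υ t)
      (Finset.mem_univ s)
    simpa [hP1 υ] using this
  -- each term bounded by η h
  constructor
  · intro hsame
    have hterm : ∀ s, |P υi s - P υj s| ≤ η * h := by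
      intro s
      rcases eq_or_ne s (sOf υi) with hs | hs
      · subst hs
        rw [abs_sub_le_iff]
        constructor
        · have h1 := hPle1 υi (sOf υi)
          have h2 := hhit υj
          rw [← hsame] at h2
          linarith
        · have h1 := hPle1 υj (sOf υi)
          have h2 := hhit υi
          linarith
      · have h1 := hmiss υi s hs
        have h2 := hmiss υj s (fun hc => hs (hc.trans hsame.symm))
        have h3 := hP0 υi s
        have h4 := hP0 υj s
        rw [abs_sub_le_iff]; constructor <;> linarith
    have hsum : ∑ s, |P υi s - P υj s| ≤ (Fintype.card S : ℝ) * (η * h) := by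
      calc ∑ s, |P υi s - P υj s| ≤ ∑ _s : S, η * h :=
            Finset.sum_le_sum fun s _ => hterm s
        _ = (Fintype.card S : ℝ) * (η * h) := by
            simp [Finset.sum_const, nsmul_eq_mul]
    have hquarter : ∑ s, |P υi s - P υj s| ≤ 1 / 4 := by
      have := mul_le_mul_of_nonneg_left hηh4 hcS.le
      calc ∑ s, |P υi s - P υj s| ≤ (Fintype.card S : ℝ) * (η * h) := hsum
        _ ≤ (Fintype.card S : ℝ) * (1 / (4 * Fintype.card S)) := this
        _ = 1 / 4 := by field_simp
    rw [hΔ]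
    rw [div_le_div_iff₀ hcΥ (by positivity)]
    nlinarith
  · intro hne
    have key : (1:ℝ) ≤ ∑ s, |P υi s - P υj s| := by
      have hsub : ({sOf υi, sOf υj} : Finset S) ⊆ Finset.univ := Finset.subset_univ _
      have hpair : ∑ s ∈ ({sOf υi, sOf υj} : Finset S), |P υi s - P υj s|
          = |P υi (sOf υi) - P υj (sOf υi)| + |P υi (sOf υj) - P υj (sOf υj)| :=
        Finset.sum_pair hne
      have hle : ∑ s ∈ ({sOf υi, sOf υj} : Finset S), |P υi s - P υj s|
          ≤ ∑ s, |P υi s - P υj s| :=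
        Finset.sum_le_sum_of_subset_of_nonneg hsub (fun s _ _ => abs_nonneg _)
      have h1 : (1 - η * h) - η * h ≤ |P υi (sOf υi) - P υj (sOf υi)| := by
        have := hhit υi
        have := hmiss υj (sOf υi) hne
        have := le_abs_self (P υi (sOf υi) - P υj (sOf υi))
        linarith
      have h2 : (1 - η * h) - η * h ≤ |P υi (sOf υj) - P υj (sOf υj)| := by
        have := hhit υj
        have := hmiss υi (sOf υj) (Ne.symm hne)
        have := neg_abs_le (P υi (sOf υj) - P υj (sOf υj))
        linarith
      -- 4 η h ≤ 1 since card S ≥ 1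
      have hc1 : (1:ℝ) ≤ Fintype.card S := by
        have : 1 ≤ Fintype.card S := Fintype.card_pos_iff.mpr ⟨sOf υi⟩
        exact_mod_cast this
      have h4 : 4 * (η * h) ≤ 1 := by
        have : 1 / (4 * (Fintype.card S : ℝ)) ≤ 1 / 4 := by
          apply div_le_div_of_nonneg_left <;> nlinarith
        nlinarith
      linarith [hle, hpair.symm ▸ hle]
    rw [hΔ, div_le_div_iff₀ hcΥ hcΥ]
    nlinarith
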